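/- Let F and G be endofunctors of a category 𝒞 and μ : F ⟶ G a natural transformation. Suppose the forgetful functor V : CoAlg^F ⥤ 𝒞 from F-coalgebras has a right adjoint Cof (with counit ε), and that CoAlg^F has equalizers. Then the pushforward functor μ_* : CoAlg^F ⥤ CoAlg^G has a right adjoint μ_¡, whose value at a G-coalgebra (C, χ) is the equalizer in CoAlg^F of the two morphisms Cof(χ) and f̃ : Cof(C) ⟶ Cof(G C), where f̃ is the adjunct under V ⊣ Cof of the composite f = μ_C ∘ F(ε_C) ∘ χ_{Cof C} : V(Cof C) ⟶ G C (with χ_{Cof C} : V(Cof C) ⟶ F(V(Cof C)) the structure map of the cofree F-coalgebra Cof C). -/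

import Mathlib

open CategoryTheory Limits

universe v u

/-!
A morphism of `G`-coalgebras `μ_* A ⟶ (c, χ)` is a carrier map `g : A ⟶ c` with
`G g ∘ μ_A ∘ χ_A = χ ∘ g`. Under `V ⊣ Cof` it corresponds to `k : A ⟶ Cof c`; transposing both
sides of the condition back along the adjunction, `χ ∘ g` becomes `Cof(χ) ∘ k` and, using that
`k` is a coalgebra map and `μ` is natural, `G g ∘ μ_A ∘ χ_A` becomes `f̃ ∘ k`. So these morphisms
are exactly the maps `A ⟶ Cof c` equalizing `Cof(χ)` and `f̃`, naturally in `A`, and the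
equalizers assemble into a right adjoint.
-/

namespace PaperStmt

variable {C : Type u} [Category.{v} C]

/-- The pushforward of an `F`-coalgebra along a natural transformation `μ : F ⟶ G`:
it sends `(V, χ)` to `(V, μ_V ∘ χ)` and is the identity on morphisms. -/
@[simps]
def pushforwardCoalg {F G : C ⥤ C} (μ : F ⟶ G) :
    Endofunctor.Coalgebra F ⥤ Endofunctor.Coalgebra G where
  obj V := ⟨V.V, V.str ≫ μ.app V.V⟩
  map {V W} g := { f := g.f, h := by dsimp; rw [Category.assoc, ← μ.naturality, g.h_assoc] }

def Endofunctor.Coalgebra.homEquivSubtype {F : C ⥤ C} (A B : Endofunctor.Coalgebra F) :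
    (A ⟶ B) ≃ { g : A.V ⟶ B.V // A.str ≫ F.map g = g ≫ B.str } where
  toFun g := ⟨g.f, g.h⟩
  invFun g := ⟨g.1, g.2⟩

section CofreeCoalgebra

variable {F : C ⥤ C} {Cof : C ⥤ Endofunctor.Coalgebra F}
  (adj : Endofunctor.Coalgebra.forget F ⊣ Cof)

lemma homEquiv_symm_eq_f_comp_counit {A : Endofunctor.Coalgebra F} {c : C} (k : A ⟶ Cof.obj c) :
    (adj.homEquiv A c).symm k = k.f ≫ adj.counit.app c :=
  adj.homEquiv_counit _ _ _

variable {G : C ⥤ C} (μ : F ⟶ G)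

/-- The morphism `f̃ : Cof c ⟶ Cof (G c)` adjunct to `μ_c ∘ F(ε_c) ∘ χ_{Cof c}`. -/
def cofreeTwist (c : C) : Cof.obj c ⟶ Cof.obj (G.obj c) :=
  adj.homEquiv (Cof.obj c) (G.obj c) ((Cof.obj c).str ≫ F.map (adj.counit.app c) ≫ μ.app c)

lemma cofreeTwist_f_comp_counit (c : C) :
    (cofreeTwist adj μ c).f ≫ adj.counit.app (G.obj c) =
      (Cof.obj c).str ≫ F.map (adj.counit.app c) ≫ μ.app c :=
  (homEquiv_symm_eq_f_comp_counit adj _).symm.trans (Equiv.symm_apply_apply _ _)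

lemma homEquiv_symm_comp_cofreeTwist {A : Endofunctor.Coalgebra F} {c : C} (k : A ⟶ Cof.obj c) :
    (adj.homEquiv A (G.obj c)).symm (k ≫ cofreeTwist adj μ c) =
      (A.str ≫ μ.app A.V) ≫ G.map ((adj.homEquiv A c).symm k) := by
  rw [homEquiv_symm_eq_f_comp_counit, homEquiv_symm_eq_f_comp_counit,
    Endofunctor.Coalgebra.comp_f]
  -- `erw`: the carrier of `Cof.obj c` also appears as `(Cof ⋙ forget F).obj c`.
  erw [Category.assoc, cofreeTwist_f_comp_counit, ← k.h_assoc, ← F.map_comp_assoc, μ.naturality,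
    Category.assoc]

lemma comp_cofree_map_eq_comp_cofreeTwist_iff {A : Endofunctor.Coalgebra F}
    (X : Endofunctor.Coalgebra G) (k : A ⟶ Cof.obj X.V) :
    k ≫ Cof.map X.str = k ≫ cofreeTwist adj μ X.V ↔
      (A.str ≫ μ.app A.V) ≫ G.map ((adj.homEquiv A X.V).symm k) =
        (adj.homEquiv A X.V).symm k ≫ X.str := by
  rw [← (adj.homEquiv A (G.obj X.V)).symm.injective.eq_iff, homEquiv_symm_comp_cofreeTwist,
    adj.homEquiv_naturality_right_symm]
  exact eq_comm

variable [HasEqualizers (Endofunctor.Coalgebra F)]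

noncomputable abbrev pushforwardRightAdjointObj (X : Endofunctor.Coalgebra G) :
    Endofunctor.Coalgebra F :=
  equalizer (Cof.map X.str) (cofreeTwist adj μ X.V)

noncomputable def pushforwardHomEquiv (A : Endofunctor.Coalgebra F)
    (X : Endofunctor.Coalgebra G) :
    ((pushforwardCoalg μ).obj A ⟶ X) ≃ (A ⟶ pushforwardRightAdjointObj adj μ X) :=
  (Endofunctor.Coalgebra.homEquivSubtype _ X).trans <|
    (adj.homEquiv A X.V).subtypeEquivOfSubtype'.trans <|
      (Equiv.subtypeEquivRight fun k =>
        (comp_cofree_map_eq_comp_cofreeTwist_iff adj μ X k).symm).trans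
      (Fork.IsLimit.homIso (equalizerIsEqualizer _ _) A).symm

lemma pushforwardHomEquiv_comp_ι (A : Endofunctor.Coalgebra F) (X : Endofunctor.Coalgebra G)
    (g : (pushforwardCoalg μ).obj A ⟶ X) :
    pushforwardHomEquiv adj μ A X g ≫ equalizer.ι _ _ = adj.homEquiv A X.V g.f :=
  congrArg Subtype.val ((Fork.IsLimit.homIso (equalizerIsEqualizer _ _) A).apply_symm_apply _)

lemma pushforwardHomEquiv_naturality {A' A : Endofunctor.Coalgebra F}
    {X : Endofunctor.Coalgebra G} (f : A' ⟶ A) (g : (pushforwardCoalg μ).obj A ⟶ X) :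
    pushforwardHomEquiv adj μ A' X ((pushforwardCoalg μ).map f ≫ g) =
      f ≫ pushforwardHomEquiv adj μ A X g := by
  apply equalizer.hom_ext
  rw [Category.assoc, pushforwardHomEquiv_comp_ι, pushforwardHomEquiv_comp_ι]
  exact adj.homEquiv_naturality_left f g.f

noncomputable def pushforwardRightAdjoint : Endofunctor.Coalgebra G ⥤ Endofunctor.Coalgebra F :=
  Adjunction.rightAdjointOfEquiv (pushforwardHomEquiv adj μ)
    fun _ _ _ => pushforwardHomEquiv_naturality adj μ

noncomputable def pushforwardAdjunction : pushforwardCoalg μ ⊣ pushforwardRightAdjoint adj μ :=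
  Adjunction.adjunctionOfEquivRight _ _

end CofreeCoalgebra

/-- If the forgetful functor from `F`-coalgebras has a right adjoint `Cof`
and `CoAlg^F` has equalizers, then the pushforward functor `μ_* : CoAlg^F ⥤ CoAlg^G` has a
right adjoint `μ_¡` whose value at `(C, χ)` is the equalizer of `Cof(χ)` and `f̃`, the adjunct
of `f = μ_C ∘ F(ε_C) ∘ χ_{Cof C}`. -/
theorem stmt2 {F G : C ⥤ C} (μ : F ⟶ G)
    (Cof : C ⥤ Endofunctor.Coalgebra F)
    (adj0 : Endofunctor.Coalgebra.forget F ⊣ Cof)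
    [HasEqualizers (Endofunctor.Coalgebra F)] :
    ∃ (R : Endofunctor.Coalgebra G ⥤ Endofunctor.Coalgebra F)
      (_ : pushforwardCoalg μ ⊣ R),
      ∀ Co : Endofunctor.Coalgebra G,
        Nonempty (R.obj Co ≅
          equalizer (Cof.map Co.str)
            (adj0.homEquiv (Cof.obj Co.V) (G.obj Co.V)
              ((Cof.obj Co.V).str ≫ F.map (adj0.counit.app Co.V) ≫ μ.app Co.V))) :=
  ⟨pushforwardRightAdjoint adj0 μ, pushforwardAdjunction adj0 μ, fun _ => ⟨Iso.refl _⟩⟩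

end PaperStmt
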